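/- arXiv:2002.07154 — 4 statements merged into one kernel-verified Lean document; each statement's English description precedes it below -/
import Mathlib

section
/- For f: ℝ² → ℝ, f(x,y) = ((x² + y²)^(3/2)) (i.e., f(x,y) = √((x²+y²)³)) and λ > 0, the proximal operator of λf is given by prox_{λf}(x,y) = (c·x, c·y) where c = 2/(1 + √(1 + 12λ√(x² + y²))). That is, (c·x, c·y) is the unique minimizer of u ↦ f(u) + (1/(2λ))‖u - (x,y)‖². -/
/-!
With `r = ‖p‖`, the triangle inequality bounds the objective below by the one-variable function
`φ s = s³ + (s - r)² / (2λ)` at `s = ‖u‖`, with equality along the ray through `p`. Since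
`2λ (φ s - φ t) = (s - t)² (1 + 2λ (s + 2t))` whenever `3λt² + t = r`, the nonnegative root `t = c r`
of this stationarity equation minimizes `φ` on `[0, ∞)`, so `c • p` is a minimizer.
It is the only one because the objective is strictly convex, its quadratic term being strongly
convex.
-/

open Set RealInnerProductSpace

lemma sqrt_sum_sq_fin_two_pow_three (u : EuclideanSpace ℝ (Fin 2)) :
    √((u 0 ^ 2 + u 1 ^ 2) ^ 3) = ‖u‖ ^ 3 := by
  rw [← Fin.sum_univ_two (fun i => u i ^ 2), ← EuclideanSpace.real_norm_sq_eq, ← pow_mul,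
    show 2 * 3 = 3 * 2 from rfl, pow_mul, Real.sqrt_sq (by positivity)]

lemma two_div_one_add_sqrt_stationary (a r : ℝ) (h : 0 ≤ 1 + 12 * a * r) :
    let c := 2 / (1 + √(1 + 12 * a * r))
    3 * a * (c * r) ^ 2 + c * r = r := by
  intro c
  obtain ⟨d, hd_nonneg, hd, hc⟩ : ∃ d, 0 ≤ d ∧ d ^ 2 = 1 + 12 * a * r ∧ c = 2 / (1 + d) :=
    ⟨_, Real.sqrt_nonneg _, Real.sq_sqrt h, rfl⟩
  have : 1 + d ≠ 0 := by positivity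
  rw [hc]
  field_simp
  linear_combination (-r) * hd

lemma pow_three_add_sq_sub_le_of_stationary {lam r s t : ℝ} (hlam : 0 < lam) (hs : 0 ≤ s)
    (ht : 0 ≤ t) (hrt : 3 * lam * t ^ 2 + t = r) :
    t ^ 3 + 1 / (2 * lam) * (t - r) ^ 2 ≤ s ^ 3 + 1 / (2 * lam) * (s - r) ^ 2 := by
  have key : s ^ 3 + 1 / (2 * lam) * (s - r) ^ 2 - (t ^ 3 + 1 / (2 * lam) * (t - r) ^ 2)
      = 1 / (2 * lam) * (s - t) ^ 2 * (1 + 2 * lam * (s + 2 * t)) := by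
    subst hrt
    field_simp
    ring
  have : 0 ≤ 1 / (2 * lam) * (s - t) ^ 2 * (1 + 2 * lam * (s + 2 * t)) := by positivity
  linarith

lemma isMinOn_norm_pow_three_add_norm_sub_sq {E : Type*} [SeminormedAddCommGroup E]
    [NormedSpace ℝ E] {lam c : ℝ} (hlam : 0 < lam) (hc : 0 ≤ c) (p : E)
    (hcp : 3 * lam * (c * ‖p‖) ^ 2 + c * ‖p‖ = ‖p‖) :
    IsMinOn (fun u : E => ‖u‖ ^ 3 + 1 / (2 * lam) * ‖u - p‖ ^ 2) univ (c • p) := by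
  intro u _
  have hcp_norm : ‖c • p‖ = c * ‖p‖ := by rw [norm_smul, Real.norm_of_nonneg hc]
  have hcp_sub : ‖c • p - p‖ ^ 2 = (c * ‖p‖ - ‖p‖) ^ 2 := by
    rw [show c • p - p = (c - 1) • p by rw [sub_smul, one_smul], norm_smul, mul_pow,
      Real.norm_eq_abs, sq_abs]
    ring
  have htri : (‖u‖ - ‖p‖) ^ 2 ≤ ‖u - p‖ ^ 2 :=
    sq_le_sq' (abs_le.mp (abs_norm_sub_norm_le u p)).1 (abs_le.mp (abs_norm_sub_norm_le u p)).2
  show ‖c • p‖ ^ 3 + 1 / (2 * lam) * ‖c • p - p‖ ^ 2 ≤ ‖u‖ ^ 3 + 1 / (2 * lam) * ‖u - p‖ ^ 2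
  rw [hcp_norm, hcp_sub]
  calc (c * ‖p‖) ^ 3 + 1 / (2 * lam) * (c * ‖p‖ - ‖p‖) ^ 2
      ≤ ‖u‖ ^ 3 + 1 / (2 * lam) * (‖u‖ - ‖p‖) ^ 2 :=
        pow_three_add_sq_sub_le_of_stationary hlam (norm_nonneg u) (by positivity) hcp
    _ ≤ ‖u‖ ^ 3 + 1 / (2 * lam) * ‖u - p‖ ^ 2 := by gcongr

section InnerProductSpace

variable {E : Type*} [NormedAddCommGroup E] [InnerProductSpace ℝ E]

lemma strongConvexOn_const_mul_norm_sub_sq (k : ℝ) (p : E) :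
    StrongConvexOn univ (2 * k) fun u : E => k * ‖u - p‖ ^ 2 := by
  rw [strongConvexOn_iff_convex]
  have haffine : (fun u : E => k * ‖u - p‖ ^ 2 - 2 * k / 2 * ‖u‖ ^ 2)
      = fun u => (-(2 * k) • innerₛₗ ℝ p) u + k * ‖p‖ ^ 2 := by
    ext u
    simp only [LinearMap.smul_apply, innerₛₗ_apply_apply, smul_eq_mul, norm_sub_sq_real,
      real_inner_comm p u]
    ring
  rw [haffine]
  exact ((-(2 * k) • innerₛₗ ℝ p).convexOn convex_univ).add_const _

lemma strictConvexOn_norm_pow_three_add_norm_sub_sq {k : ℝ} (hk : 0 < k) (p : E) :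
    StrictConvexOn ℝ univ fun u : E => ‖u‖ ^ 3 + k * ‖u - p‖ ^ 2 :=
  (convexOn_univ_norm.pow (fun _ _ => norm_nonneg _) 3).add_strictConvexOn
    ((strongConvexOn_const_mul_norm_sub_sq k p).strictConvexOn (by positivity))

end InnerProductSpace

/-- The proximal operator of `λ f` for `f(x,y) = √((x²+y²)³)` is
`prox_{λf}(x,y) = (c x, c y)` with `c = 2/(1 + √(1 + 12 λ √(x²+y²)))`:
this point is the unique minimizer of `u ↦ f u + (1/(2λ))‖u - (x,y)‖²`. -/
theorem prox_of_norm_cubed (lam : ℝ) (hlam : 0 < lam) (p : EuclideanSpace ℝ (Fin 2)) :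
    let f : EuclideanSpace ℝ (Fin 2) → ℝ := fun u => Real.sqrt (((u 0) ^ 2 + (u 1) ^ 2) ^ 3)
    let c : ℝ := 2 / (1 + Real.sqrt (1 + 12 * lam * Real.sqrt ((p 0) ^ 2 + (p 1) ^ 2)))
    (∀ u, f (c • p) + 1 / (2 * lam) * ‖c • p - p‖ ^ 2 ≤ f u + 1 / (2 * lam) * ‖u - p‖ ^ 2) ∧
      (∀ u, (∀ w, f u + 1 / (2 * lam) * ‖u - p‖ ^ 2 ≤ f w + 1 / (2 * lam) * ‖w - p‖ ^ 2) →
        u = c • p) := by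
  intro f c
  have hf : ∀ u, f u = ‖u‖ ^ 3 := sqrt_sum_sq_fin_two_pow_three
  have hnorm : √(p 0 ^ 2 + p 1 ^ 2) = ‖p‖ := by
    rw [← Real.sqrt_sq (norm_nonneg p), EuclideanSpace.real_norm_sq_eq, Fin.sum_univ_two]
  have hc : c = 2 / (1 + √(1 + 12 * lam * ‖p‖)) := by simp only [c, hnorm]
  have hmin : IsMinOn (fun u => ‖u‖ ^ 3 + 1 / (2 * lam) * ‖u - p‖ ^ 2) univ (c • p) :=
    isMinOn_norm_pow_three_add_norm_sub_sq hlam (by rw [hc]; positivity) p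
      (hc ▸ two_div_one_add_sqrt_stationary lam ‖p‖ (by positivity))
  simp only [hf]
  refine ⟨fun u => hmin (mem_univ u), fun u hu => ?_⟩
  exact (strictConvexOn_norm_pow_three_add_norm_sub_sq (by positivity) p).eq_of_isMinOn
    (fun w _ => hu w) hmin (mem_univ u) (mem_univ _)
end

section
/- Let (e_n) be a monotonically decreasing positive sequence converging to 0 such that for some l₀ ≥ 1, n₀ ≥ l₀, C₀ > 0 and θ ∈ (0, 1/2], e_{n-l₀} - e_n ≥ C₀ e_n^{2θ} for all n ≥ n₀. Then there exist C₁ > 0 and Q ∈ [0,1) such that e_n ≤ C₁ Q^n for all n ≥ n₀ (linear convergence). -/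
open Filter Topology

private lemma pow_sub_le_aux {Q : ℝ} (hQ0 : 0 < Q) (hQ1 : Q ≤ 1) (a b : ℕ) :
    Q ^ (a - b) ≤ Q ^ a / Q ^ b := by
  rcases le_or_gt b a with h | h
  · rw [pow_sub₀ Q (ne_of_gt hQ0) h, div_eq_mul_inv]
  · rw [Nat.sub_eq_zero_of_le h.le, pow_zero]
    rw [le_div_iff₀ (pow_pos hQ0 b), one_mul]
    exact pow_le_pow_of_le_one hQ0.le hQ1 h.le

/-- KL rate, case `θ ∈ (0, 1/2]`: if a nonincreasing positive sequence `e` converging to `0`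
satisfies `e (n - l₀) - e n ≥ C₀ e n ^ (2θ)` for all `n ≥ n₀`, then `e` converges linearly:
there are `C₁ > 0` and `Q ∈ [0,1)` with `e n ≤ C₁ Q^n` for all `n ≥ n₀`. -/
theorem kl_rate_linear (e : ℕ → ℝ) (hpos : ∀ n, 0 < e n) (hmono : Antitone e)
    (hlim : Tendsto e atTop (𝓝 0)) (l₀ n₀ : ℕ) (hl₀ : 1 ≤ l₀) (hn₀ : l₀ ≤ n₀)
    (C₀ θ : ℝ) (hC₀ : 0 < C₀) (hθ : θ ∈ Set.Ioc (0 : ℝ) (1 / 2))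
    (hrec : ∀ n ≥ n₀, C₀ * e n ^ (2 * θ) ≤ e (n - l₀) - e n) :
    ∃ C₁ > (0 : ℝ), ∃ Q ∈ Set.Ico (0 : ℝ) 1, ∀ n ≥ n₀, e n ≤ C₁ * Q ^ n := by
  obtain ⟨θpos, θle⟩ := hθ
  -- find N ≥ n₀ with e n ≤ 1 for n ≥ N
  obtain ⟨M, hM⟩ := Filter.eventually_atTop.mp (hlim.eventually (gt_mem_nhds one_pos))
  set N := max M n₀ with hN
  have hNn₀ : n₀ ≤ N := le_max_right _ _
  -- constants
  set c : ℝ := (1 + C₀)⁻¹ with hc_def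
  have hc0 : (0:ℝ) < c := by positivity
  have hc1 : c < 1 := by
    rw [hc_def, inv_lt_one_iff₀]; right; linarith
  have hcc : (1 + C₀) * c = 1 := by
    rw [hc_def, mul_inv_cancel₀]; positivity
  set Q : ℝ := c ^ ((l₀ : ℝ)⁻¹) with hQ_def
  have hl₀pos : (0:ℝ) < (l₀ : ℝ) := by exact_mod_cast hl₀
  have hQ0 : 0 < Q := Real.rpow_pos_of_pos hc0 _
  have hQ1 : Q < 1 := Real.rpow_lt_one hc0.le hc1 (by positivity)
  have hQl : Q ^ l₀ = c := by
    rw [hQ_def, ← Real.rpow_natCast (c ^ ((l₀:ℝ)⁻¹)) l₀, ← Real.rpow_mul hc0.le,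
      inv_mul_cancel₀ (ne_of_gt hl₀pos), Real.rpow_one]
  -- key step inequality
  have key : ∀ n, N ≤ n → (1 + C₀) * e n ≤ e (n - l₀) := by
    intro n hn
    have h2 := hrec n (hNn₀.trans hn)
    have he1 : e n ≤ 1 := (hM n ((le_max_left M n₀).trans hn)).le
    have h3 : e n ≤ e n ^ (2 * θ) := by
      nth_rewrite 1 [← Real.rpow_one (e n)]
      exact Real.rpow_le_rpow_of_exponent_ge (hpos n) he1 (by linarith)
    nlinarith [mul_le_mul_of_nonneg_left h3 hC₀.le]
  -- geometric decay along steps of size l₀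
  have ind : ∀ k : ℕ, e (N + k * l₀) ≤ e N * c ^ k := by
    intro k
    induction k with
    | zero => simp
    | succ k ih =>
      have h := key (N + (k + 1) * l₀) (Nat.le_add_right _ _)
      have hsub : N + (k + 1) * l₀ - l₀ = N + k * l₀ := by
        rw [Nat.succ_mul, ← Nat.add_assoc, Nat.add_sub_cancel]
      rw [hsub] at h
      have h' := mul_le_mul_of_nonneg_right (h.trans ih) hc0.le
      calc e (N + (k + 1) * l₀)
          = (1 + C₀) * e (N + (k + 1) * l₀) * c := by
            rw [mul_comm (1 + C₀) _, mul_assoc, hcc, mul_one]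
        _ ≤ e N * c ^ k * c := h'
        _ = e N * c ^ (k + 1) := by ring
  -- choose the constant
  refine ⟨e n₀ / Q ^ N + e N / Q ^ (N + l₀),
    add_pos (div_pos (hpos n₀) (pow_pos hQ0 N)) (div_pos (hpos N) (pow_pos hQ0 (N + l₀))), Q, ⟨hQ0.le, hQ1⟩, ?_⟩
  intro n hn
  have hQnpos : (0:ℝ) < Q ^ n := pow_pos hQ0 n
  rcases le_or_gt N n with hNle | hlt
  · -- n ≥ N
    set k := (n - N) / l₀ with hk_def
    have hk1 : N + k * l₀ ≤ n :=
      (Nat.add_le_add_left (Nat.div_mul_le_self _ _) N).trans (by omega)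
    have hk2 : n - N - l₀ ≤ k * l₀ := by
      have hmod : (n - N) % l₀ < l₀ := Nat.mod_lt _ hl₀
      have hdm := Nat.div_add_mod (n - N) l₀
      rw [Nat.sub_le_iff_le_add]
      calc n - N = l₀ * k + (n - N) % l₀ := hdm.symm
        _ ≤ k * l₀ + l₀ := by rw [mul_comm]; omega
    have step1 : e n ≤ e N * c ^ k := le_trans (hmono hk1) (ind k)
    have step2 : c ^ k ≤ Q ^ n / Q ^ (N + l₀) := by
      have h1 : c ^ k = Q ^ (k * l₀) := by rw [mul_comm, pow_mul, hQl]
      have h2 : Q ^ (k * l₀) ≤ Q ^ (n - N - l₀) :=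
        pow_le_pow_of_le_one hQ0.le hQ1.le hk2
      have h3 : Q ^ (n - N - l₀) = Q ^ (n - (N + l₀)) := by rw [Nat.sub_sub]
      calc c ^ k = Q ^ (k * l₀) := h1
        _ ≤ Q ^ (n - (N + l₀)) := h3 ▸ h2
        _ ≤ Q ^ n / Q ^ (N + l₀) := pow_sub_le_aux hQ0 hQ1.le n (N + l₀)
    have hEN : 0 < e N := hpos N
    calc e n ≤ e N * (Q ^ n / Q ^ (N + l₀)) :=
          step1.trans (mul_le_mul_of_nonneg_left step2 hEN.le)
      _ = e N / Q ^ (N + l₀) * Q ^ n := by ring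
      _ ≤ (e n₀ / Q ^ N + e N / Q ^ (N + l₀)) * Q ^ n := by
          have : (0:ℝ) < e n₀ / Q ^ N := div_pos (hpos n₀) (pow_pos hQ0 N)
          nlinarith
  · -- n₀ ≤ n < N
    have h1 : e n ≤ e n₀ := hmono hn
    have h2 : Q ^ N ≤ Q ^ n := pow_le_pow_of_le_one hQ0.le hQ1.le hlt.le
    have h3 : e n₀ = e n₀ / Q ^ N * Q ^ N := by
      field_simp
    calc e n ≤ e n₀ / Q ^ N * Q ^ N := h3 ▸ h1
      _ ≤ e n₀ / Q ^ N * Q ^ n := by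
          exact mul_le_mul_of_nonneg_left h2 (div_pos (hpos n₀) (pow_pos hQ0 N)).le
      _ ≤ (e n₀ / Q ^ N + e N / Q ^ (N + l₀)) * Q ^ n := by
          have : (0:ℝ) < e N / Q ^ (N + l₀) := div_pos (hpos N) (pow_pos hQ0 (N + l₀))
          nlinarith
end

section
/- Let (e_n) be a monotonically decreasing positive sequence converging to 0 such that for some l₀ ≥ 1, n₀ ≥ l₀, C₀ > 0 and θ ∈ [1/2, 1), e_{n-l₀} - e_n ≥ C₀ e_n^{2θ} for all n ≥ n₀. Then there exists C₂ > 0 such that e_n ≤ C₂ (n - l₀ + 1)^{-1/(2θ-1)} for all n ≥ n₀ + l₀ (sublinear polynomial rate). -/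
open Filter Topology

/-!
Put `β = 2θ - 1`. The recursion says `e (n - l₀) ≥ e n * (1 + C₀ e n ^ β)`, and Bernoulli's
inequality turns this into a uniform increment `e (n - l₀) ^ (-β) + c ≤ e n ^ (-β)` with `c > 0`
(the factor `C₀ e n ^ β` is bounded by `C₀ e 0 ^ β`). Hence `e n ^ (-β)` grows at least linearly
in `n`, and raising to the power `-1/β` gives the rate.
-/

/-- Bernoulli's inequality `(1 - s) ^ β ≤ 1 - β s`, applied with `s = t / (1 + t)`. -/
lemma mul_div_one_add_le_one_sub_rpow_neg {β t : ℝ} (hβ₀ : 0 ≤ β) (hβ₁ : β ≤ 1) (ht : 0 ≤ t) :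
    β * t / (1 + t) ≤ 1 - (1 + t) ^ (-β) := by
  have hbase : (1 + t)⁻¹ = 1 + -(t / (1 + t)) := by field_simp; ring
  have hs : -1 ≤ -(t / (1 + t)) := by
    rw [neg_le_neg_iff, div_le_one (by positivity)]
    linarith
  have := rpow_one_add_le_one_add_mul_self hs hβ₀ hβ₁
  rw [← hbase, Real.inv_rpow (by positivity), ← Real.rpow_neg (by positivity)] at this
  linarith [mul_div_assoc β t (1 + t)]

lemma rpow_neg_add_le_rpow_neg {a b β C₀ : ℝ} (hb : 0 < b) (hβ₀ : 0 ≤ β) (hβ₁ : β ≤ 1)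
    (hC₀ : 0 ≤ C₀) (hab : C₀ * b ^ (1 + β) ≤ a - b) :
    a ^ (-β) + β * C₀ / (1 + C₀ * b ^ β) ≤ b ^ (-β) := by
  set t := C₀ * b ^ β with ht
  have ht₀ : 0 ≤ t := by positivity
  have hbt : b * (1 + t) ≤ a := by
    rw [Real.rpow_add hb, Real.rpow_one] at hab
    linarith
  have hscale : b ^ (-β) * t = C₀ := by
    rw [ht, Real.rpow_neg hb.le]
    field_simp
  calc a ^ (-β) + β * C₀ / (1 + t)
      ≤ (b * (1 + t)) ^ (-β) + β * C₀ / (1 + t) := by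
        gcongr ?_ + _
        exact Real.rpow_le_rpow_of_nonpos (by positivity) hbt (by linarith)
    _ = b ^ (-β) * ((1 + t) ^ (-β) + β * t / (1 + t)) := by
        rw [Real.mul_rpow hb.le (by positivity), ← hscale]
        ring
    _ ≤ b ^ (-β) := by
        have := mul_div_one_add_le_one_sub_rpow_neg hβ₀ hβ₁ ht₀
        have : 0 ≤ b ^ (-β) := by positivity
        nlinarith

lemma rpow_neg_sub_add_le_rpow_neg {e : ℕ → ℝ} (hpos : ∀ n, 0 < e n) (hmono : Antitone e)
    {l n₀ : ℕ} {β C₀ : ℝ} (hβ₀ : 0 ≤ β) (hβ₁ : β ≤ 1) (hC₀ : 0 ≤ C₀)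
    (hrec : ∀ n ≥ n₀, C₀ * e n ^ (1 + β) ≤ e (n - l) - e n) :
    ∀ n ≥ n₀, e (n - l) ^ (-β) + β * C₀ / (1 + C₀ * e 0 ^ β) ≤ e n ^ (-β) := by
  intro n hn
  have hdrop := rpow_neg_add_le_rpow_neg (hpos n) hβ₀ hβ₁ hC₀ (hrec n hn)
  have : β * C₀ / (1 + C₀ * e 0 ^ β) ≤ β * C₀ / (1 + C₀ * e n ^ β) := by
    have := Real.rpow_pos_of_pos (hpos n) β
    gcongr β * C₀ / (1 + C₀ * ?_ ^ β)
    · exact (hpos n).le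
    · exact hmono n.zero_le
  linarith

lemma mul_sub_add_one_div_le_of_add_le {f : ℕ → ℝ} (hf : ∀ n, 0 ≤ f n) {l n₀ : ℕ} (hl : 0 < l)
    {c : ℝ} (hc : 0 ≤ c) (hstep : ∀ n ≥ n₀, f (n - l) + c ≤ f n) :
    ∀ n ≥ n₀, c * ((n : ℝ) - n₀ + 1) / l ≤ f n := by
  intro n
  refine Nat.strong_induction_on n fun n ih hn => ?_
  have hlR : (0 : ℝ) < l := by exact_mod_cast hl
  by_cases hnl : n < n₀ + l
  · have hlen : (n : ℝ) - n₀ + 1 ≤ l := by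
      have : (n : ℝ) + 1 ≤ n₀ + l := by exact_mod_cast Nat.succ_le_of_lt hnl
      linarith
    calc c * ((n : ℝ) - n₀ + 1) / l ≤ c := by
          rw [div_le_iff₀ hlR]
          exact mul_le_mul_of_nonneg_left hlen hc
      _ ≤ f n := by linarith [hstep n hn, hf (n - l)]
  · have hprev := ih (n - l) (by omega) (by omega)
    rw [Nat.cast_sub (by omega)] at hprev
    calc c * ((n : ℝ) - n₀ + 1) / l = c * ((n : ℝ) - l - n₀ + 1) / l + c := by
          field_simp
          ring
      _ ≤ f n := by linarith [hstep n hn]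

lemma mul_sub_add_one_le_of_add_le {f : ℕ → ℝ} (hf : ∀ n, 0 ≤ f n) {l n₀ : ℕ} (hl : 0 < l)
    {c : ℝ} (hc : 0 ≤ c) (hstep : ∀ n ≥ n₀, f (n - l) + c ≤ f n) :
    ∀ n ≥ n₀, c / (l * (n₀ + 1)) * ((n : ℝ) - l + 1) ≤ f n := by
  intro n hn
  have hn' : (n₀ : ℝ) ≤ n := by exact_mod_cast hn
  have hlen : (n : ℝ) - l + 1 ≤ (n₀ + 1) * ((n : ℝ) - n₀ + 1) := by
    nlinarith [(l.cast_nonneg : (0 : ℝ) ≤ l), (n₀.cast_nonneg : (0 : ℝ) ≤ n₀)]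
  calc c / (l * (n₀ + 1)) * ((n : ℝ) - l + 1)
      ≤ c / (l * (n₀ + 1)) * ((n₀ + 1) * ((n : ℝ) - n₀ + 1)) := by gcongr
    _ = c * ((n : ℝ) - n₀ + 1) / l := by field_simp
    _ ≤ f n := mul_sub_add_one_div_le_of_add_le hf hl hc hstep n hn

lemma le_rpow_neg_inv_of_le_rpow_neg {x y β : ℝ} (hx : 0 < x) (hy : 0 < y) (hβ : 0 < β)
    (h : y ≤ x ^ (-β)) : x ≤ y ^ (-(1 / β)) := by
  calc x = (x ^ (-β)) ^ (-(1 / β)) := by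
        rw [← Real.rpow_mul hx.le, neg_mul_neg, mul_one_div_cancel hβ.ne', Real.rpow_one]
    _ ≤ y ^ (-(1 / β)) := Real.rpow_le_rpow_of_nonpos hy h (by simp only [neg_nonpos]; positivity)

theorem kl_rate_sublinear_general (e : ℕ → ℝ) (hpos : ∀ n, 0 < e n) (hmono : Antitone e)
    (l₀ n₀ : ℕ) (hl₀ : 1 ≤ l₀)
    (C₀ θ : ℝ) (hC₀ : 0 < C₀) (hθ : θ ∈ Set.Ico (1 / 2 : ℝ) 1)
    (hrec : ∀ n ≥ n₀, C₀ * e n ^ (2 * θ) ≤ e (n - l₀) - e n) :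
    ∃ C₂ > (0 : ℝ), ∀ n ≥ n₀ + l₀,
      e n ≤ C₂ * ((n : ℝ) - l₀ + 1) ^ (-(1 / (2 * θ - 1))) := by
  obtain ⟨hθ₁, hθ₂⟩ := hθ
  rcases hθ₁.eq_or_lt with rfl | hθ₁
  · -- the exponent is `-(1 / 0) = 0`
    exact ⟨e 0, hpos 0, fun n _ => by norm_num; exact hmono n.zero_le⟩
  set β := 2 * θ - 1
  have hβ : 0 < β := by linarith
  set c := β * C₀ / (1 + C₀ * e 0 ^ β)
  have hc : 0 < c := by
    have := Real.rpow_pos_of_pos (hpos 0) β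
    positivity
  have hstep := rpow_neg_sub_add_le_rpow_neg hpos hmono hβ.le (by linarith) hC₀.le
    (fun n hn => by rw [show 1 + β = 2 * θ by ring]; exact hrec n hn)
  have hgrowth := mul_sub_add_one_le_of_add_le
    (fun n => (Real.rpow_pos_of_pos (hpos n) (-β)).le) hl₀ hc.le hstep
  set c' := c / (l₀ * (n₀ + 1))
  refine ⟨c' ^ (-(1 / β)), by positivity, fun n hn => ?_⟩
  have hm : 0 < (n : ℝ) - l₀ + 1 := by
    have : (l₀ : ℝ) ≤ n := by exact_mod_cast (by omega : l₀ ≤ n)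
    linarith
  calc e n ≤ (c' * ((n : ℝ) - l₀ + 1)) ^ (-(1 / β)) :=
        le_rpow_neg_inv_of_le_rpow_neg (hpos n) (by positivity) hβ (hgrowth n (by omega))
    _ = c' ^ (-(1 / β)) * ((n : ℝ) - l₀ + 1) ^ (-(1 / β)) := Real.mul_rpow (by positivity) hm.le

/-- KL rate, case `θ ∈ [1/2, 1)`: if a nonincreasing positive sequence `e` converging to `0`
satisfies `e (n - l₀) - e n ≥ C₀ e n ^ (2θ)` for all `n ≥ n₀`, then there is `C₂ > 0` with
`e n ≤ C₂ (n - l₀ + 1)^{-1/(2θ-1)}` for all `n ≥ n₀ + l₀`. -/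
theorem kl_rate_sublinear (e : ℕ → ℝ) (hpos : ∀ n, 0 < e n) (hmono : Antitone e)
    (hlim : Tendsto e atTop (𝓝 0)) (l₀ n₀ : ℕ) (hl₀ : 1 ≤ l₀) (hn₀ : l₀ ≤ n₀)
    (C₀ θ : ℝ) (hC₀ : 0 < C₀) (hθ : θ ∈ Set.Ico (1 / 2 : ℝ) 1)
    (hrec : ∀ n ≥ n₀, C₀ * e n ^ (2 * θ) ≤ e (n - l₀) - e n) :
    ∃ C₂ > (0 : ℝ), ∀ n ≥ n₀ + l₀,
      e n ≤ C₂ * ((n : ℝ) - l₀ + 1) ^ (-(1 / (2 * θ - 1))) :=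
  kl_rate_sublinear_general e hpos hmono l₀ n₀ hl₀ C₀ θ hC₀ hθ hrec
end

section
/- Let g: ℝ^m → ℝ be concave and differentiable with L-Lipschitz gradient, and z_n = x_n + β_n(x_n - x_{n-1}). Then ⟨∇g(z_n), x_{n+1} - x_n⟩ ≥ g(x_{n+1}) - g(x_n) - (L|β_n|/2)‖x_{n+1} - x_n‖² - (L|β_n|/2)‖x_n - x_{n-1}‖². -/
/-!
Concavity gives `g xp - g x ≤ ⟪∇g x, xp - x⟫`. Replacing `∇g x` by `∇g z`, where
`z = x + β (x - xm)`, costs at most `L ‖x - z‖ ‖xp - x‖ = L |β| ‖x - xm‖ ‖xp - x‖`, and AM–GM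
splits this product into the two quadratic terms.
-/

open RealInnerProductSpace

theorem ConcaveOn.sub_le_of_hasFDerivAt {E : Type*} [NormedAddCommGroup E] [NormedSpace ℝ E]
    {s : Set E} {f : E → ℝ} {f' : E →L[ℝ] ℝ} {x y : E} (hf : ConcaveOn ℝ s f)
    (hx : x ∈ s) (hy : y ∈ s) (hf' : HasFDerivAt f f' x) :
    f y - f x ≤ f' (y - x) := by
  let ℓ : ℝ →ᵃ[ℝ] E := AffineMap.lineMap x y
  have hline : ConcaveOn ℝ (ℓ ⁻¹' s) (f ∘ ℓ) := hf.comp_affineMap ℓ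
  have hderiv : HasDerivAt (f ∘ ℓ) (f' (y - x)) 0 := by
    refine HasFDerivAt.comp_hasDerivAt (0 : ℝ) ?_ AffineMap.hasDerivAt_lineMap
    simpa [ℓ] using hf'
  simpa [ℓ, slope_def_field] using
    hline.slope_le_of_hasDerivAt (by simpa [ℓ] using hx) (by simpa [ℓ] using hy) one_pos hderiv

theorem ConcaveOn.sub_le_inner_of_hasGradientAt {F : Type*} [NormedAddCommGroup F]
    [InnerProductSpace ℝ F] [CompleteSpace F] {s : Set F} {f : F → ℝ} {f' x y : F}
    (hf : ConcaveOn ℝ s f) (hx : x ∈ s) (hy : y ∈ s) (hf' : HasGradientAt f f' x) :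
    f y - f x ≤ ⟪f', y - x⟫ := by
  simpa using hf.sub_le_of_hasFDerivAt hx hy hf'.hasFDerivAt

/-- For concave `g` with `L`-Lipschitz gradient and `z = x + β(x - xm)`,
`⟪∇g(z), xp - x⟫ ≥ g(xp) - g(x) - (L|β|/2)‖xp - x‖² - (L|β|/2)‖x - xm‖²`. -/
theorem inner_grad_lower_bound_concave {m : ℕ} (g : EuclideanSpace ℝ (Fin m) → ℝ)
    (g' : EuclideanSpace ℝ (Fin m) → EuclideanSpace ℝ (Fin m)) (L : ℝ) (hL : 0 < L)
    (hconc : ConcaveOn ℝ Set.univ g)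
    (hg : ∀ x, HasGradientAt g (g' x) x)
    (hlip : ∀ x y, ‖g' x - g' y‖ ≤ L * ‖x - y‖)
    (xm x xp : EuclideanSpace ℝ (Fin m)) (β : ℝ) :
    g xp - g x - L * |β| / 2 * ‖xp - x‖ ^ 2 - L * |β| / 2 * ‖x - xm‖ ^ 2
      ≤ ⟪g' (x + β • (x - xm)), xp - x⟫ := by
  set z := x + β • (x - xm)
  have hfirst : g xp - g x ≤ ⟪g' x, xp - x⟫ :=
    hconc.sub_le_inner_of_hasGradientAt trivial trivial (hg x)
  have hdist : ‖x - z‖ = |β| * ‖x - xm‖ := by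
    rw [show x - z = -(β • (x - xm)) by simp [z], norm_neg, norm_smul, Real.norm_eq_abs]
  have hshift : ⟪g' x - g' z, xp - x⟫ ≤ L * |β| * (‖xp - x‖ * ‖x - xm‖) :=
    calc ⟪g' x - g' z, xp - x⟫ ≤ ‖g' x - g' z‖ * ‖xp - x‖ := real_inner_le_norm _ _
      _ ≤ L * ‖x - z‖ * ‖xp - x‖ := by gcongr; exact hlip x z
      _ = L * |β| * (‖xp - x‖ * ‖x - xm‖) := by rw [hdist]; ring
  have hamgm : L * |β| * (‖xp - x‖ * ‖x - xm‖)
      ≤ L * |β| / 2 * ‖xp - x‖ ^ 2 + L * |β| / 2 * ‖x - xm‖ ^ 2 := by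
    have hsq := two_mul_le_add_sq ‖xp - x‖ ‖x - xm‖
    have hcoef : 0 ≤ L * |β| := by positivity
    nlinarith
  rw [inner_sub_left] at hshift
  linarith
end
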